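/- For fixed Q ∈ ℕ, β > 0 and t > 0, the Legendre transform λ ↦ π^*_{Q,λ}(t) is concave in λ on [0,∞): its second λ-derivative equals -[(∂²π_{Q,λ}/∂λ²)(y) · π''_{Q,λ}(y) - ((∂π'_{Q,λ}/∂λ)(y))²]/π''_{Q,λ}(y) evaluated at y = y_{Q,λ}(t), which is ≤ 0 by the Cauchy–Schwarz inequality applied to the weighted sums Σ_{q=1}^{Q} q e^{β(y+λ)q} and Σ_{q=1}^∞ q e^{βyq}-type terms. -/

import Mathlib

/-!
Up to powers of `β`, `π_{Q,λ}`, `π'_{Q,λ}` and `π''_{Q,λ}` are exponential sums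
`∑ n ^ k * exp (β u n)` with `k = -1, 0, 1`, over the head `1 ≤ n ≤ Q` at `u = y + λ` and over the
tail `n > Q` at `u = y`; differentiating in `u` multiplies by `β` and raises `k` by one.
As `π'_{Q,λ}` is increasing, `π_{Q,λ}` is convex on `y < 0`, so the supremum defining
`π*_{Q,λ}(t)` is attained at `y(λ)`.
By the implicit function theorem `y' = -A / B`, where `A = ∂π'/∂λ` and `B = π''` at `y(λ)`, and
by the envelope theorem `dπ*/dλ = -∂π/∂λ = -∑_{q ≤ Q} e^{β(y + λ)q}`. Differentiating once more
gives `-A (1 + y') = -(A B - A²) / B`, which is `≤ 0` because `0 ≤ A ≤ B`: their difference is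
the tail part of `π''`.
-/

open Set
open scoped BigOperators

noncomputable def piQ (β lam : ℝ) (Q : ℕ) (y : ℝ) : ℝ :=
  (∑ q ∈ Finset.Icc 1 Q, Real.exp (β * (y + lam) * q) / (β * q)) +
  ∑' q : ℕ, Real.exp (β * y * ((q + Q + 1 : ℕ) : ℝ)) / (β * ((q + Q + 1 : ℕ) : ℝ))

noncomputable def piQ' (β lam : ℝ) (Q : ℕ) (y : ℝ) : ℝ :=
  (∑ q ∈ Finset.Icc 1 Q, Real.exp (β * (y + lam) * q)) +
  ∑' q : ℕ, Real.exp (β * y * ((q + Q + 1 : ℕ) : ℝ))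

/-- `∂π'_{Q,λ}/∂λ = ∂²π_{Q,λ}/∂λ² = β Σ_{q=1}^{Q} q e^{β(y+λ)q}`. -/
noncomputable def dLamPiQ' (β lam : ℝ) (Q : ℕ) (y : ℝ) : ℝ :=
  β * ∑ q ∈ Finset.Icc 1 Q, (q : ℝ) * Real.exp (β * (y + lam) * q)

/-- `π''_{Q,λ}(y) = β (Σ_{q=1}^{Q} q e^{β(y+λ)q} + Σ_{q=Q+1}^∞ q e^{βyq})`. -/
noncomputable def piQ'' (β lam : ℝ) (Q : ℕ) (y : ℝ) : ℝ :=
  β * ((∑ q ∈ Finset.Icc 1 Q, (q : ℝ) * Real.exp (β * (y + lam) * q)) +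
    ∑' q : ℕ, ((q + Q + 1 : ℕ) : ℝ) * Real.exp (β * y * ((q + Q + 1 : ℕ) : ℝ)))

open Real Filter Topology

noncomputable def expHead (β : ℝ) (Q : ℕ) (k : ℤ) (u : ℝ) : ℝ :=
  ∑ q ∈ Finset.Icc 1 Q, (q : ℝ) ^ k * exp (β * u * q)

noncomputable def expTail (β : ℝ) (Q : ℕ) (k : ℤ) (y : ℝ) : ℝ :=
  ∑' q : ℕ, ((q + Q + 1 : ℕ) : ℝ) ^ k * exp (β * y * ((q + Q + 1 : ℕ) : ℝ))

theorem exists_hasDerivAt_implicit {f : ℝ × ℝ → ℝ} {a b : ℝ} {p : ℝ × ℝ}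
    (hf : HasStrictFDerivAt f
      (a • ContinuousLinearMap.fst ℝ ℝ ℝ + b • ContinuousLinearMap.snd ℝ ℝ ℝ) p)
    (hb : b ≠ 0) :
    ∃ ψ : ℝ → ℝ, ψ p.1 = p.2 ∧ HasDerivAt ψ (-a / b) p.1 ∧ ∀ᶠ x in 𝓝 p.1, f (x, ψ x) = f p := by
  have hright : (b • .id ℝ ℝ) ∘L (b⁻¹ • .id ℝ ℝ) = .id ℝ ℝ := by ext; simp [hb]
  have hleft : (b⁻¹ • .id ℝ ℝ) ∘L (b • .id ℝ ℝ) = .id ℝ ℝ := by ext; simp [hb]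
  have hinr : (a • ContinuousLinearMap.fst ℝ ℝ ℝ + b • ContinuousLinearMap.snd ℝ ℝ ℝ) ∘L
      .inr ℝ ℝ ℝ = b • .id ℝ ℝ := by ext; simp
  have hinv : ((a • ContinuousLinearMap.fst ℝ ℝ ℝ + b • ContinuousLinearMap.snd ℝ ℝ ℝ) ∘L
      .inr ℝ ℝ ℝ).IsInvertible := hinr ▸ .of_inverse hright hleft
  refine ⟨hf.implicitFunctionOfProdDomain hinv, ?_, ?_,
    hf.eventually_apply_implicitFunctionOfProdDomain hinv⟩
  · exact (hf.eventually_apply_eq_iff_implicitFunctionOfProdDomain hinv).self_of_nhds.1 rfl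
  · refine (hf.hasStrictFDerivAt_implicitFunctionOfProdDomain hinv).hasFDerivAt.hasDerivAt
      |>.congr_deriv ?_
    simp [hinr, ContinuousLinearMap.inverse_eq hright hleft, div_eq_mul_inv]

theorem sSup_image_mul_sub_eq {f f' : ℝ → ℝ} {s : Set ℝ} (hs : IsOpen s) (hsc : Convex ℝ s)
    (hf : ∀ y ∈ s, HasDerivAt f (f' y) y) (hf' : MonotoneOn f' s) {t y₀ : ℝ} (hy₀ : y₀ ∈ s)
    (ht : f' y₀ = t) :
    sSup ((fun y => t * y - f y) '' s) = t * y₀ - f y₀ := by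
  have hg : ∀ y ∈ s, HasDerivAt (fun y => f y - t * y) (f' y - t) y := fun y hy =>
    (hf y hy).sub (by simpa using (hasDerivAt_id y).const_mul t)
  have hconv : ConvexOn ℝ s fun y => f y - t * y := by
    refine MonotoneOn.convexOn_of_deriv hsc
      (fun y hy => (hg y hy).continuousAt.continuousWithinAt)
      (fun y hy => (hg y (interior_subset hy)).differentiableAt.differentiableWithinAt) ?_
    rw [hs.interior_eq]
    refine (hf'.add_const (-t)).congr fun y hy => ?_
    rw [(hg y hy).deriv, sub_eq_add_neg]
  have hmin : IsMinOn (fun y => f y - t * y) s y₀ := by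
    refine hconv.isMinOn_of_rightDeriv_eq_zero (hs.interior_eq.symm ▸ hy₀) ?_
    rw [(hg y₀ hy₀).hasDerivWithinAt.derivWithin (uniqueDiffWithinAt_Ioi y₀), ht, sub_self]
  refine IsGreatest.csSup_eq ⟨mem_image_of_mem _ hy₀, ?_⟩
  rintro _ ⟨y, hy, rfl⟩
  linarith [show f y₀ - t * y₀ ≤ f y - t * y from hmin hy]

lemma hasDerivAt_zpow_mul_exp (β u : ℝ) {n : ℝ} (hn : n ≠ 0) (k : ℤ) :
    HasDerivAt (fun u => n ^ k * exp (β * u * n)) (β * (n ^ (k + 1) * exp (β * u * n))) u := by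
  refine ((((hasDerivAt_id u).const_mul β).mul_const n).exp.const_mul (n ^ k)).congr_deriv ?_
  rw [zpow_add_one₀ hn, id, mul_one]
  ring

lemma hasDerivAt_expHead (β : ℝ) (Q : ℕ) (k : ℤ) (u : ℝ) :
    HasDerivAt (expHead β Q k) (β * expHead β Q (k + 1) u) u := by
  unfold expHead
  rw [Finset.mul_sum]
  exact HasDerivAt.fun_sum fun q hq =>
    hasDerivAt_zpow_mul_exp β u (by have := (Finset.mem_Icc.1 hq).1; positivity) k

lemma hasStrictDerivAt_expHead (β : ℝ) (Q : ℕ) (k : ℤ) (u : ℝ) :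
    HasStrictDerivAt (expHead β Q k) (β * expHead β Q (k + 1) u) u :=
  hasStrictDerivAt_of_hasDerivAt_of_continuousAt
    (Eventually.of_forall fun v => hasDerivAt_expHead β Q k v)
    ((hasDerivAt_expHead β Q (k + 1) u).continuousAt.const_mul β)

lemma expHead_nonneg (β : ℝ) (Q : ℕ) (k : ℤ) (u : ℝ) : 0 ≤ expHead β Q k u :=
  Finset.sum_nonneg fun q _ => by positivity

lemma summable_expTail {β : ℝ} (hβ : 0 < β) {y : ℝ} (hy : y < 0) (Q : ℕ) (k : ℤ) :
    Summable fun q : ℕ => ((q + Q + 1 : ℕ) : ℝ) ^ k * exp (β * y * ((q + Q + 1 : ℕ) : ℝ)) := by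
  have hr : ‖exp (β * y)‖ < 1 := by
    rw [norm_of_nonneg (exp_pos _).le, exp_lt_one_iff]; nlinarith
  have hgeom : Summable fun q : ℕ => ((q + Q + 1 : ℕ) : ℝ) ^ k.toNat * exp (β * y) ^ (q + Q + 1) :=
    (summable_nat_add_iff (f := fun n : ℕ => (n : ℝ) ^ k.toNat * exp (β * y) ^ n) (Q + 1)).2
      (summable_pow_mul_geometric_of_norm_lt_one k.toNat hr)
  refine hgeom.of_nonneg_of_le (fun q => by positivity) fun q => ?_
  have hn : (1 : ℝ) ≤ ((q + Q + 1 : ℕ) : ℝ) := by exact_mod_cast Nat.le_add_left 1 _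
  rw [← exp_nat_mul, mul_comm _ (β * y), ← zpow_natCast]
  gcongr
  exact Int.self_le_toNat k

lemma expTail_pos {β : ℝ} (hβ : 0 < β) {y : ℝ} (hy : y < 0) (Q : ℕ) (k : ℤ) : 0 < expTail β Q k y :=
  (summable_expTail hβ hy Q k).tsum_pos (fun q => by positivity) 0 (by positivity)

lemma hasDerivAt_expTail {β : ℝ} (hβ : 0 < β) {y : ℝ} (hy : y < 0) (Q : ℕ) (k : ℤ) :
    HasDerivAt (expTail β Q k) (β * expTail β Q (k + 1) y) y := by
  obtain ⟨y₁, hyy₁, hy₁⟩ := exists_between hy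
  unfold expTail
  rw [← tsum_mul_left]
  refine hasDerivAt_tsum_of_isPreconnected
    (u := fun q => β * (((q + Q + 1 : ℕ) : ℝ) ^ (k + 1) * exp (β * y₁ * ((q + Q + 1 : ℕ) : ℝ))))
    ((summable_expTail hβ hy₁ Q (k + 1)).mul_left β) isOpen_Iio (convex_Iio y₁).isPreconnected
    (fun q z _ => hasDerivAt_zpow_mul_exp β z (by positivity) k) (fun q z hz => ?_) hyy₁
    (summable_expTail hβ hy Q k) hyy₁
  rw [norm_of_nonneg (by positivity)]
  gcongr
  exact le_of_lt hz

lemma hasStrictDerivAt_expTail {β : ℝ} (hβ : 0 < β) {y : ℝ} (hy : y < 0) (Q : ℕ) (k : ℤ) :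
    HasStrictDerivAt (expTail β Q k) (β * expTail β Q (k + 1) y) y :=
  hasStrictDerivAt_of_hasDerivAt_of_continuousAt
    (eventually_lt_nhds hy |>.mono fun _ hz => hasDerivAt_expTail hβ hz Q k)
    ((hasDerivAt_expTail hβ hy Q (k + 1)).continuousAt.const_mul β)

lemma piQ_eq (β lam : ℝ) (Q : ℕ) (y : ℝ) :
    piQ β lam Q y = β⁻¹ * (expHead β Q (-1) (y + lam) + expTail β Q (-1) y) := by
  simp only [piQ, expHead, expTail, mul_add, Finset.mul_sum, ← tsum_mul_left, zpow_neg_one,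
    div_eq_mul_inv, mul_inv]
  congr 1
  · exact Finset.sum_congr rfl fun q _ => by ring
  · exact tsum_congr fun q => by ring

lemma piQ'_eq (β lam : ℝ) (Q : ℕ) (y : ℝ) :
    piQ' β lam Q y = expHead β Q 0 (y + lam) + expTail β Q 0 y := by
  simp [piQ', expHead, expTail]

lemma piQ''_eq (β lam : ℝ) (Q : ℕ) (y : ℝ) :
    piQ'' β lam Q y = β * (expHead β Q 1 (y + lam) + expTail β Q 1 y) := by
  simp [piQ'', expHead, expTail]

lemma dLamPiQ'_eq (β lam : ℝ) (Q : ℕ) (y : ℝ) :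
    dLamPiQ' β lam Q y = β * expHead β Q 1 (y + lam) := by
  simp [dLamPiQ', expHead]

section PiQ

variable {β : ℝ} {Q : ℕ}

lemma hasDerivAt_piQ (hβ : 0 < β) (lam : ℝ) {y : ℝ} (hy : y < 0) :
    HasDerivAt (piQ β lam Q) (piQ' β lam Q y) y := by
  rw [show piQ β lam Q = _ from funext (piQ_eq β lam Q), piQ'_eq]
  refine (((hasDerivAt_expHead β Q (-1) (y + lam)).comp_add_const y lam).add
    (hasDerivAt_expTail hβ hy Q (-1))).const_mul β⁻¹ |>.congr_deriv ?_
  rw [neg_add_cancel]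
  field_simp

lemma hasDerivAt_piQ' (hβ : 0 < β) (lam : ℝ) {y : ℝ} (hy : y < 0) :
    HasDerivAt (piQ' β lam Q) (piQ'' β lam Q y) y := by
  rw [show piQ' β lam Q = _ from funext (piQ'_eq β lam Q), piQ''_eq]
  refine (((hasDerivAt_expHead β Q 0 (y + lam)).comp_add_const y lam).add
    (hasDerivAt_expTail hβ hy Q 0)).congr_deriv ?_
  simp only [zero_add]
  ring

lemma hasStrictFDerivAt_piQ' (hβ : 0 < β) (lam : ℝ) {y : ℝ} (hy : y < 0) :
    HasStrictFDerivAt (fun p : ℝ × ℝ => piQ' β p.1 Q p.2)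
      (dLamPiQ' β lam Q y • ContinuousLinearMap.fst ℝ ℝ ℝ +
        piQ'' β lam Q y • ContinuousLinearMap.snd ℝ ℝ ℝ) (lam, y) := by
  have hHead := (hasStrictDerivAt_expHead β Q 0 (y + lam)).comp_hasStrictFDerivAt (lam, y)
    ((hasStrictFDerivAt_snd (𝕜 := ℝ) (p := (lam, y))).add (hasStrictFDerivAt_fst (𝕜 := ℝ)))
  have hTail := (hasStrictDerivAt_expTail hβ hy Q 0).comp_hasStrictFDerivAt (lam, y)
    (hasStrictFDerivAt_snd (𝕜 := ℝ) (p := (lam, y)))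
  rw [show (fun p : ℝ × ℝ => piQ' β p.1 Q p.2) = _ from funext fun p => piQ'_eq β p.1 Q p.2]
  refine (hHead.add hTail).congr_fderiv ?_
  ext <;> simp [dLamPiQ'_eq, piQ''_eq, mul_add]

lemma piQ''_pos (hβ : 0 < β) (lam : ℝ) {y : ℝ} (hy : y < 0) : 0 < piQ'' β lam Q y := by
  rw [piQ''_eq]
  exact mul_pos hβ (add_pos_of_nonneg_of_pos (expHead_nonneg ..) (expTail_pos hβ hy Q 1))

lemma dLamPiQ'_nonneg (hβ : 0 < β) (lam : ℝ) (y : ℝ) : 0 ≤ dLamPiQ' β lam Q y := by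
  rw [dLamPiQ'_eq]
  exact mul_nonneg hβ.le (expHead_nonneg ..)

lemma dLamPiQ'_le_piQ'' (hβ : 0 < β) (lam : ℝ) {y : ℝ} (hy : y < 0) :
    dLamPiQ' β lam Q y ≤ piQ'' β lam Q y := by
  rw [dLamPiQ'_eq, piQ''_eq]
  have := expTail_pos hβ hy Q 1
  gcongr
  linarith

lemma neg_div_piQ''_nonpos (hβ : 0 < β) (lam : ℝ) {y : ℝ} (hy : y < 0) :
    -((dLamPiQ' β lam Q y * piQ'' β lam Q y - dLamPiQ' β lam Q y ^ 2) / piQ'' β lam Q y) ≤ 0 := by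
  have hA := dLamPiQ'_nonneg hβ lam y (Q := Q)
  have hAB := dLamPiQ'_le_piQ'' hβ lam hy (Q := Q)
  exact neg_nonpos.2 (div_nonneg (by nlinarith) (piQ''_pos hβ lam hy).le)

lemma strictMonoOn_piQ' (hβ : 0 < β) (lam : ℝ) : StrictMonoOn (piQ' β lam Q) (Iio 0) := by
  refine strictMonoOn_of_deriv_pos (convex_Iio 0)
    (fun y hy => (hasDerivAt_piQ' hβ lam hy).continuousAt.continuousWithinAt) fun y hy => ?_
  rw [interior_Iio] at hy
  rw [(hasDerivAt_piQ' hβ lam hy).deriv]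
  exact piQ''_pos hβ lam hy

end PiQ

section Maximizer

variable {β t : ℝ} {Q : ℕ} {yfun : ℝ → ℝ}

lemma hasDerivWithinAt_of_piQ'_eq (hβ : 0 < β)
    (hy : ∀ lam ≥ (0 : ℝ), yfun lam < 0 ∧ piQ' β lam Q (yfun lam) = t) {l₀ : ℝ} (hl₀ : 0 ≤ l₀) :
    HasDerivWithinAt yfun (-dLamPiQ' β l₀ Q (yfun l₀) / piQ'' β l₀ Q (yfun l₀)) (Ici 0) l₀ := by
  obtain ⟨hy₀, ht₀⟩ := hy l₀ hl₀
  obtain ⟨ψ, hψ₀, hψ, hψ_eq⟩ :=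
    exists_hasDerivAt_implicit (hasStrictFDerivAt_piQ' (Q := Q) hβ l₀ hy₀) (piQ''_pos hβ l₀ hy₀).ne'
  have hψ_neg : ∀ᶠ l in 𝓝 l₀, ψ l < 0 :=
    hψ.continuousAt.eventually_lt continuousAt_const (hψ₀ ▸ hy₀)
  have hyψ : yfun =ᶠ[𝓝[Ici 0] l₀] ψ := by
    filter_upwards [self_mem_nhdsWithin, nhdsWithin_le_nhds (hψ_eq.and hψ_neg)]
      with l hl ⟨hψl, hψl_neg⟩
    exact (strictMonoOn_piQ' hβ l).injOn (hy l hl).1 hψl_neg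
      ((hy l hl).2.trans (ht₀.symm.trans hψl.symm))
  exact hψ.hasDerivWithinAt.congr_of_eventuallyEq hyψ hψ₀.symm

lemma hasDerivWithinAt_legendre (hβ : 0 < β) {s : Set ℝ} {l₀ y' : ℝ}
    (hyd : HasDerivWithinAt yfun y' s l₀) (hy₀ : yfun l₀ < 0) (ht₀ : piQ' β l₀ Q (yfun l₀) = t) :
    HasDerivWithinAt (fun l => t * yfun l - piQ β l Q (yfun l))
      (-expHead β Q 0 (yfun l₀ + l₀)) s l₀ := by
  have hu : HasDerivWithinAt (fun l => yfun l + l) (y' + 1) s l₀ :=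
    hyd.add (hasDerivWithinAt_id l₀ s)
  have hHead := (hasDerivAt_expHead β Q (-1) (yfun l₀ + l₀)).comp_hasDerivWithinAt
    (h := fun l => yfun l + l) l₀ hu
  have hTail := (hasDerivAt_expTail hβ hy₀ Q (-1)).comp_hasDerivWithinAt l₀ hyd
  simp only [piQ_eq]
  refine ((hyd.const_mul t).sub ((hHead.add hTail).const_mul β⁻¹)).congr_deriv ?_
  rw [← ht₀, piQ'_eq, neg_add_cancel]
  field_simp
  ring

lemma hasDerivWithinAt_neg_expHead {s : Set ℝ} {l₀ : ℝ}
    (hyd : HasDerivWithinAt yfun (-dLamPiQ' β l₀ Q (yfun l₀) / piQ'' β l₀ Q (yfun l₀)) s l₀)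
    (hB : piQ'' β l₀ Q (yfun l₀) ≠ 0) :
    HasDerivWithinAt (fun l => -expHead β Q 0 (yfun l + l))
      (-((dLamPiQ' β l₀ Q (yfun l₀) * piQ'' β l₀ Q (yfun l₀) -
          dLamPiQ' β l₀ Q (yfun l₀) ^ 2) / piQ'' β l₀ Q (yfun l₀))) s l₀ := by
  have hu : HasDerivWithinAt (fun l => yfun l + l)
      (-dLamPiQ' β l₀ Q (yfun l₀) / piQ'' β l₀ Q (yfun l₀) + 1) s l₀ :=
    hyd.add (hasDerivWithinAt_id l₀ s)
  refine ((hasDerivAt_expHead β Q 0 (yfun l₀ + l₀)).comp_hasDerivWithinAt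
    (h := fun l => yfun l + l) l₀ hu).neg.congr_deriv ?_
  rw [dLamPiQ'_eq, zero_add]
  field_simp
  ring

end Maximizer

theorem piQstar_concave_in_lambda_general (β t : ℝ) (Q : ℕ) (hβ : 0 < β)
    (yfun : ℝ → ℝ)
    (hy : ∀ lam ≥ (0 : ℝ), yfun lam < 0 ∧ piQ' β lam Q (yfun lam) = t) :
    ConcaveOn ℝ (Ici (0 : ℝ))
      (fun lam => sSup ((fun y => t * y - piQ β lam Q y) '' Iio (0 : ℝ))) ∧
    (∀ lam > (0 : ℝ),
      deriv (deriv (fun l => sSup ((fun y => t * y - piQ β l Q y) '' Iio (0 : ℝ)))) lam =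
        -((dLamPiQ' β lam Q (yfun lam) * piQ'' β lam Q (yfun lam) -
            (dLamPiQ' β lam Q (yfun lam)) ^ 2) / piQ'' β lam Q (yfun lam)) ∧
      -((dLamPiQ' β lam Q (yfun lam) * piQ'' β lam Q (yfun lam) -
          (dLamPiQ' β lam Q (yfun lam)) ^ 2) / piQ'' β lam Q (yfun lam)) ≤ 0) := by
  set F := fun lam => sSup ((fun y => t * y - piQ β lam Q y) '' Iio (0 : ℝ))
  set A := fun l => dLamPiQ' β l Q (yfun l)
  set B := fun l => piQ'' β l Q (yfun l)
  have hFeq : EqOn F (fun l => t * yfun l - piQ β l Q (yfun l)) (Ici 0) := fun l hl =>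
    sSup_image_mul_sub_eq isOpen_Iio (convex_Iio 0) (fun y hy => hasDerivAt_piQ hβ l hy)
      (strictMonoOn_piQ' hβ l).monotoneOn (hy l hl).1 (hy l hl).2
  have hyd : ∀ l ∈ Ici (0 : ℝ), HasDerivWithinAt yfun (-A l / B l) (Ici 0) l := fun l hl =>
    hasDerivWithinAt_of_piQ'_eq hβ hy hl
  have hF' : ∀ l ∈ Ici (0 : ℝ),
      HasDerivWithinAt F (-expHead β Q 0 (yfun l + l)) (Ici 0) l := fun l hl =>
    (hasDerivWithinAt_legendre hβ (hyd l hl) (hy l hl).1 (hy l hl).2).congr hFeq (hFeq hl)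
  have hF'' : ∀ l ∈ Ici (0 : ℝ), HasDerivWithinAt (fun l => -expHead β Q 0 (yfun l + l))
      (-((A l * B l - A l ^ 2) / B l)) (Ici 0) l := fun l hl =>
    hasDerivWithinAt_neg_expHead (hyd l hl) (piQ''_pos hβ l (hy l hl).1).ne'
  have hnonpos : ∀ l ∈ Ici (0 : ℝ), -((A l * B l - A l ^ 2) / B l) ≤ 0 := fun l hl =>
    neg_div_piQ''_nonpos hβ l (hy l hl).1
  have hderivF : ∀ l > (0 : ℝ), deriv F =ᶠ[𝓝 l] fun l => -expHead β Q 0 (yfun l + l) := fun l hl =>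
    (eventually_gt_nhds hl).mono fun m hm => ((hF' m hm.le).hasDerivAt (Ici_mem_nhds hm)).deriv
  refine ⟨?_, fun l hl => ⟨?_, hnonpos l hl.le⟩⟩
  · refine concaveOn_of_hasDerivWithinAt2_nonpos (convex_Ici 0)
      (f' := fun l => -expHead β Q 0 (yfun l + l)) (f'' := fun l => -((A l * B l - A l ^ 2) / B l))
      (fun l hl => (hF' l hl).continuousWithinAt) ?_ ?_ ?_ <;> rw [interior_Ici]
    · exact fun l hl => (hF' l (Ioi_subset_Ici_self hl)).mono Ioi_subset_Ici_self
    · exact fun l hl => (hF'' l (Ioi_subset_Ici_self hl)).mono Ioi_subset_Ici_self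
    · exact fun l hl => hnonpos l (Ioi_subset_Ici_self hl)
  · exact ((hF'' l hl.le).hasDerivAt (Ici_mem_nhds hl)).congr_of_eventuallyEq (hderivF l hl)
      |>.deriv

/-- For fixed `Q`, `β > 0`, `t > 0`, the Legendre transform
`λ ↦ π*_{Q,λ}(t) = sup_{y<0}(t y - π_{Q,λ}(y))` is concave in `λ` on `[0,∞)`;
its second λ-derivative equals
`-[(∂²π/∂λ²)(y)·π''(y) - ((∂π'/∂λ)(y))²]/π''(y)` at `y = y_{Q,λ}(t)`,
which is `≤ 0`. -/
theorem piQstar_concave_in_lambda (β t : ℝ) (Q : ℕ) (hβ : 0 < β) (ht : 0 < t)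
    (yfun : ℝ → ℝ)
    (hy : ∀ lam ≥ (0 : ℝ), yfun lam < 0 ∧ piQ' β lam Q (yfun lam) = t) :
    ConcaveOn ℝ (Ici (0 : ℝ))
      (fun lam => sSup ((fun y => t * y - piQ β lam Q y) '' Iio (0 : ℝ))) ∧
    (∀ lam > (0 : ℝ),
      deriv (deriv (fun l => sSup ((fun y => t * y - piQ β l Q y) '' Iio (0 : ℝ)))) lam =
        -((dLamPiQ' β lam Q (yfun lam) * piQ'' β lam Q (yfun lam) -
            (dLamPiQ' β lam Q (yfun lam)) ^ 2) / piQ'' β lam Q (yfun lam)) ∧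
      -((dLamPiQ' β lam Q (yfun lam) * piQ'' β lam Q (yfun lam) -
          (dLamPiQ' β lam Q (yfun lam)) ^ 2) / piQ'' β lam Q (yfun lam)) ≤ 0) :=
  piQstar_concave_in_lambda_general β t Q hβ yfun hy
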